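/- arXiv:1603.09433 — 3 statements merged into one kernel-verified Lean document; each statement's English description precedes it below -/
import Mathlib

section
/- For any M, N ≥ 2 and p ≥ 1: δ_p(M,N) = 1/M^{p−1} + 1/N^{p−1} − 1/(MN)^{p−1} + Σ_{s=2}^{M} Σ_{t=2}^{N} δ_p^{st}(M,N), where δ_p^{st}(M,N) = (M!/(M−s)!)·(S(p,s)/M^p)·(N!/(N−t)!)·(S(p,t)/N^p)·ε_p(s,t), S(p,s) is the Stirling number of the second kind, and ε_p(s,t) = P(π ▷ σ | |π|=s, |σ|=t). -/
/-- cyclic successor on `Fin p` -/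
def cyc (p : ℕ) (y : Fin p) : Fin p := ⟨((y : ℕ) + 1) % p, Nat.mod_lt _ y.pos⟩

/-- `δ_p(M,N)` -/
noncomputable def delta (M N p : ℕ) : ℝ :=
  (Nat.card {ab : (Fin p → ZMod M) × (Fin p → ZMod N) //
    (Finset.univ.val.map fun y => (ab.1 y, ab.2 y)) =
    (Finset.univ.val.map fun y => (ab.1 y, ab.2 (cyc p y)))} : ℝ) / ((M : ℝ) * N) ^ p

/-- cyclic predecessor on `Fin p` -/
def cycPred (p : ℕ) (y : Fin p) : Fin p := ⟨((y : ℕ) + p - 1) % p, Nat.mod_lt _ y.pos⟩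

/-- the compatibility condition `π ▷ σ` -/
def tri (p : ℕ) (π σ : Finpartition (Finset.univ : Finset (Fin p))) : Prop :=
  ∀ β ∈ π.parts, ∀ γ ∈ σ.parts, (β ∩ γ).card = (β.image (cycPred p) ∩ γ).card

instance (p : ℕ) (π σ : Finpartition (Finset.univ : Finset (Fin p))) :
    Decidable (tri p π σ) := by unfold tri; infer_instance

/-- the Stirling number `S_{ps}`: the number of partitions of `{1,...,p}` with `s` blocks -/
def Spart (p s : ℕ) : ℕ :=
  (Finset.univ.filter
    (fun π : Finpartition (Finset.univ : Finset (Fin p)) => π.parts.card = s)).card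

/-- `ε_p(s,t) = P(π ▷ σ | |π| = s, |σ| = t)` -/
noncomputable def eps (p s t : ℕ) : ℝ :=
  ((Finset.univ.filter
    (fun πσ : Finpartition (Finset.univ : Finset (Fin p)) ×
        Finpartition (Finset.univ : Finset (Fin p)) =>
      πσ.1.parts.card = s ∧ πσ.2.parts.card = t ∧ tri p πσ.1 πσ.2)).card : ℝ) /
    ((Spart p s : ℝ) * Spart p t)

/-!
A pair `(a, b)` satisfies the multiset condition exactly when the kernel partitions
`π = ker a`, `σ = ker b` satisfy `#(β ∩ γ) = #(e β ∩ γ)` for all blocks, `e` being the cyclic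
shift; reversing `Fin p` turns the shift `y ↦ y + 1` of `δ_p` into the shift `cycPred` of
`π ▷ σ`. A partition with `k` blocks is the kernel of exactly `M!/(M-k)!` maps into `ZMod M`, so
`(MN)^p δ_p(M,N)` is the sum of `M!/(M-|π|)! · N!/(N-|σ|)!` over the pairs with `π ▷ σ`.
Pairs in which one partition has a single block are always compatible; since
`∑_π M!/(M-|π|)! = M^p`, inclusion–exclusion shows that they contribute `MN^p + M^pN - MN`.
Grouping the remaining pairs by their numbers of blocks gives the double sum.
-/

open Finset

namespace Finpartition

variable {α : Type*} [DecidableEq α] {s : Finset α}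

lemma parts_eq_image_part (P : Finpartition s) : P.parts = s.image P.part := by
  ext t
  refine ⟨fun ht => ?_, ?_⟩
  · obtain ⟨x, hx, rfl⟩ := P.part_surjOn ht
    exact mem_image_of_mem _ hx
  · intro ht
    obtain ⟨x, hx, rfl⟩ := mem_image.1 ht
    exact P.part_mem.2 hx

lemma ext_part {P Q : Finpartition s} (h : ∀ x ∈ s, P.part x = Q.part x) : P = Q := by
  ext1
  rw [parts_eq_image_part, parts_eq_image_part]
  exact image_congr h

lemma parts_eq_singleton_of_card_parts_eq_one {P : Finpartition s} (h : #P.parts = 1) :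
    P.parts = {s} := by
  obtain ⟨t, ht⟩ := card_eq_one.1 h
  have hs := P.sup_parts
  rw [ht, sup_singleton] at hs
  rw [ht, ← hs]
  rfl

lemma card_parts_pos (P : Finpartition s) (hs : s.Nonempty) : 0 < #P.parts :=
  card_pos.2 (P.parts_nonempty hs.ne_empty)

end Finpartition

section KernelPartition

variable {α X : Type*} [Fintype α] [DecidableEq α] [DecidableEq X]

def kerPart (a : α → X) : Finpartition (univ : Finset α) :=
  Finpartition.ofSetoid (Setoid.ker a)

lemma mem_part_kerPart {a : α → X} {x y : α} : y ∈ (kerPart a).part x ↔ a x = a y :=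
  Finpartition.mem_part_ofSetoid_iff_rel

lemma kerPart_eq_iff {a : α → X} {π : Finpartition (univ : Finset α)} :
    kerPart a = π ↔ ∀ x y, a x = a y ↔ y ∈ π.part x := by
  refine ⟨fun h x y => h ▸ mem_part_kerPart.symm, fun h => ?_⟩
  refine Finpartition.ext_part fun x _ => ?_
  ext y
  rw [mem_part_kerPart, h]

variable [Fintype X] (π : Finpartition (univ : Finset α))

noncomputable def embeddingPartsEquiv : (π.parts ↪ X) ≃ {a : α → X // kerPart a = π} :=
  Equiv.ofBijective (fun f => ⟨fun x => f ⟨π.part x, π.part_mem.2 (mem_univ x)⟩, by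
      refine kerPart_eq_iff.2 fun x y => ?_
      rw [f.injective.eq_iff, Subtype.mk_eq_mk,
        π.mem_part_iff_part_eq_part (mem_univ y) (mem_univ x), eq_comm]⟩) <| by
    constructor
    · intro f g hfg
      ext ⟨t, ht⟩ : 2
      obtain ⟨x, -, rfl⟩ := π.part_surjOn ht
      exact congrFun (congrArg Subtype.val hfg) x
    · rintro ⟨a, ha⟩
      have hrep : ∀ t : π.parts, ∃ x, π.part x = t := fun t =>
        (π.part_surjOn t.2).imp fun _ hx => hx.2
      choose rep hrep using hrep
      have hker := kerPart_eq_iff.1 ha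
      refine ⟨⟨fun t => a (rep t), fun t u htu => ?_⟩, ?_⟩
      · rw [← Subtype.coe_inj, ← hrep t, ← hrep u]
        exact ((π.mem_part_iff_part_eq_part (mem_univ _) (mem_univ _)).1
          ((hker _ _).1 htu)).symm
      · ext1
        funext x
        refine (hker _ _).2 ?_
        rw [hrep]
        exact π.mem_part (mem_univ x)

lemma card_filter_kerPart_eq :
    #{a : α → X | kerPart a = π} = (Fintype.card X).descFactorial #π.parts := by
  rw [← Fintype.card_subtype, ← Fintype.card_congr (embeddingPartsEquiv π),
    Fintype.card_embedding_eq, Fintype.card_coe]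

variable (α) in
lemma sum_descFactorial_card_parts (n : ℕ) :
    ∑ π : Finpartition (univ : Finset α), n.descFactorial #π.parts = n ^ Fintype.card α := by
  rw [← Fintype.card_fin n, ← Fintype.card_fun, ← card_univ (α := α → Fin n),
    card_eq_sum_card_fiberwise (f := kerPart) (t := univ) fun _ _ => mem_univ _]
  simp only [card_filter_kerPart_eq]

lemma filter_card_parts_eq_one [Nonempty α] :
    ({π : Finpartition (univ : Finset α) | #π.parts = 1} : Finset _)
      = {Finpartition.indiscrete univ_nonempty.ne_empty} := by
  ext π
  simp only [mem_filter, mem_univ, true_and, mem_singleton]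
  refine ⟨fun h => ?_, fun h => h ▸ card_singleton _⟩
  ext1
  exact Finpartition.parts_eq_singleton_of_card_parts_eq_one h

variable (α) in
lemma sum_descFactorial_card_parts_ne_one [Nonempty α] (n : ℕ) :
    ∑ π : Finpartition (univ : Finset α) with #π.parts ≠ 1, n.descFactorial #π.parts + n
      = n ^ Fintype.card α := by
  rw [← sum_descFactorial_card_parts α n, ← sum_filter_add_sum_filter_not univ (#·.parts ≠ 1)]
  simp only [not_not, filter_card_parts_eq_one, sum_singleton, Finpartition.indiscrete_parts,
    card_singleton, Nat.descFactorial_one]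

end KernelPartition

lemma count_map_univ_val_pair {α X Y : Type*} [Fintype α] [DecidableEq X] [DecidableEq Y]
    (a : α → X) (b : α → Y) (u : X) (v : Y) :
    Multiset.count (u, v) (univ.val.map fun y => (a y, b y)) = #{y | a y = u ∧ b y = v} := by
  rw [Multiset.count_map]
  exact congrArg Multiset.card (Multiset.filter_congr fun y _ => by rw [eq_comm, Prod.ext_iff])

section ShiftCompatible

variable {α : Type*} [Fintype α] [DecidableEq α] (e : α → α)

def IsShiftCompatible (π σ : Finpartition (univ : Finset α)) : Prop :=
  ∀ β ∈ π.parts, ∀ γ ∈ σ.parts, #(β ∩ γ) = #(β.image e ∩ γ)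

instance (π σ : Finpartition (univ : Finset α)) : Decidable (IsShiftCompatible e π σ) := by
  unfold IsShiftCompatible; infer_instance

variable {e}

lemma isShiftCompatible_of_card_parts_left_eq_one (he : e.Injective)
    {π σ : Finpartition (univ : Finset α)} (hπ : #π.parts = 1) : IsShiftCompatible e π σ := by
  intro β hβ γ _
  rw [Finpartition.parts_eq_singleton_of_card_parts_eq_one hπ, mem_singleton] at hβ
  rw [hβ, image_univ_of_surjective (Finite.surjective_of_injective he)]

lemma isShiftCompatible_of_card_parts_right_eq_one (he : e.Injective)
    {π σ : Finpartition (univ : Finset α)} (hσ : #σ.parts = 1) : IsShiftCompatible e π σ := by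
  intro β _ γ hγ
  rw [Finpartition.parts_eq_singleton_of_card_parts_eq_one hσ, mem_singleton] at hγ
  rw [hγ, inter_univ, inter_univ, card_image_of_injective _ he]

variable {X Y : Type*} [DecidableEq X] [DecidableEq Y]

lemma map_pair_eq_iff_isShiftCompatible (he : e.Injective) (a : α → X) (b : α → Y) :
    univ.val.map (fun y => (a y, b y)) = univ.val.map (fun y => (a y, b (e y))) ↔
      IsShiftCompatible e (kerPart a) (kerPart b) := by
  have hpart : ∀ x z, #((kerPart a).part x ∩ (kerPart b).part z)
      = #{y | a y = a x ∧ b y = b z} := fun x z => by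
    congr 1; ext y; simp [mem_part_kerPart, eq_comm]
  have hshift : ∀ x z, #(((kerPart a).part x).image e ∩ (kerPart b).part z)
      = #{y | a y = a x ∧ b (e y) = b z} := fun x z => by
    symm
    rw [← card_image_of_injective _ he]
    congr 1; ext w
    simp only [mem_image, mem_filter, mem_univ, true_and, mem_inter, mem_part_kerPart]
    constructor
    · rintro ⟨y, ⟨hay, hby⟩, rfl⟩
      exact ⟨⟨y, hay.symm, rfl⟩, hby.symm⟩
    · rintro ⟨⟨y, hay, rfl⟩, hby⟩
      exact ⟨y, ⟨hay.symm, hby.symm⟩, rfl⟩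
  rw [Multiset.ext]
  constructor
  · intro h β hβ γ hγ
    obtain ⟨x, -, rfl⟩ := (kerPart a).part_surjOn hβ
    obtain ⟨z, -, rfl⟩ := (kerPart b).part_surjOn hγ
    have := h (a x, b z)
    simp only [count_map_univ_val_pair] at this
    rwa [← hpart, ← hshift] at this
  · rintro h ⟨u, v⟩
    simp only [count_map_univ_val_pair]
    by_cases huv : (∃ x, a x = u) ∧ ∃ z, b z = v
    · obtain ⟨⟨x, rfl⟩, ⟨z, rfl⟩⟩ := huv
      rw [← hpart, ← hshift]
      exact h _ ((kerPart a).part_mem.2 (mem_univ x)) _ ((kerPart b).part_mem.2 (mem_univ z))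
    · rw [card_eq_zero.2, card_eq_zero.2] <;>
        exact filter_eq_empty_iff.2 fun y _ hy => huv ⟨⟨y, hy.1⟩, ⟨_, hy.2⟩⟩

variable [Fintype X] [Fintype Y]

lemma card_map_pair_eq_sum (he : e.Injective) :
    #{ab : (α → X) × (α → Y) |
        univ.val.map (fun y => (ab.1 y, ab.2 y)) = univ.val.map (fun y => (ab.1 y, ab.2 (e y)))}
      = ∑ πσ : Finpartition (univ : Finset α) × Finpartition (univ : Finset α)
          with IsShiftCompatible e πσ.1 πσ.2,
          (Fintype.card X).descFactorial #πσ.1.parts * (Fintype.card Y).descFactorial #πσ.2.parts := by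
  simp only [map_pair_eq_iff_isShiftCompatible he]
  rw [card_eq_sum_card_fiberwise (f := fun ab => (kerPart ab.1, kerPart ab.2))
    (t := {πσ | IsShiftCompatible e πσ.1 πσ.2}) fun ab hab => by simpa using hab]
  refine sum_congr rfl fun πσ hπσ => ?_
  rw [filter_filter, ← card_filter_kerPart_eq, ← card_filter_kerPart_eq, ← card_product,
    ← filter_product, univ_product_univ]
  refine congrArg card (filter_congr fun ab _ => ?_)
  rw [Prod.ext_iff]
  exact ⟨fun h => h.2, fun h => ⟨h.1 ▸ h.2 ▸ (mem_filter.1 hπσ).2, h⟩⟩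

lemma card_map_pair_eq_of_semiconj (r : α ≃ α) {e' : α → α} (h : Function.Semiconj r e' e) :
    #{ab : (α → X) × (α → Y) |
        univ.val.map (fun y => (ab.1 y, ab.2 y)) = univ.val.map (fun y => (ab.1 y, ab.2 (e' y)))}
      = #{ab : (α → X) × (α → Y) |
        univ.val.map (fun y => (ab.1 y, ab.2 y)) = univ.val.map (fun y => (ab.1 y, ab.2 (e y)))} := by
  have reindex : ∀ f : α → X × Y, univ.val.map (f ∘ r) = univ.val.map f := fun f => by
    rw [← Multiset.map_map, Multiset.map_univ_val_equiv]
  have key : ∀ (a : α → X) (b : α → Y),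
      univ.val.map (fun y => (a (r y), b (r y))) = univ.val.map (fun y => (a (r y), b (r (e' y))))
        ↔ univ.val.map (fun y => (a y, b y)) = univ.val.map (fun y => (a y, b (e y))) := by
    intro a b
    simp only [h.eq]
    rw [← reindex (fun y => (a y, b y)), ← reindex (fun y => (a y, b (e y)))]
    rfl
  apply card_nbij' (fun ab => (ab.1 ∘ r.symm, ab.2 ∘ r.symm)) (fun ab => (ab.1 ∘ r, ab.2 ∘ r))
  · intro ab hab
    simp only [coe_filter, mem_univ, true_and, Set.mem_ofPred_eq] at hab ⊢
    rw [← key]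
    simpa using hab
  · intro ab hab
    simp only [coe_filter, mem_univ, true_and, Set.mem_ofPred_eq] at hab ⊢
    exact (key _ _).2 hab
  · intro ab _; simp [Function.comp_assoc]
  · intro ab _; simp [Function.comp_assoc]

variable (e) in
lemma sum_isShiftCompatible_add_mul (he : e.Injective) (f g : Finpartition (univ : Finset α) → ℕ) :
    ∑ πσ : Finpartition (univ : Finset α) × Finpartition (univ : Finset α)
        with IsShiftCompatible e πσ.1 πσ.2, f πσ.1 * g πσ.2
      + (∑ π with #π.parts ≠ 1, f π) * ∑ σ with #σ.parts ≠ 1, g σ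
      = (∑ π, f π) * (∑ σ, g σ)
        + ∑ πσ : Finpartition (univ : Finset α) × Finpartition (univ : Finset α)
            with IsShiftCompatible e πσ.1 πσ.2 ∧ #πσ.1.parts ≠ 1 ∧ #πσ.2.parts ≠ 1,
            f πσ.1 * g πσ.2 := by
  set P := fun πσ : Finpartition (univ : Finset α) × Finpartition (univ : Finset α) =>
    #πσ.1.parts ≠ 1 ∧ #πσ.2.parts ≠ 1
  have hprod : (∑ π with #π.parts ≠ 1, f π) * (∑ σ with #σ.parts ≠ 1, g σ)
      = ∑ πσ with P πσ, f πσ.1 * g πσ.2 := by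
    rw [sum_mul_sum, ← sum_product', ← filter_product, univ_product_univ]
  have hcompat : ∑ πσ with IsShiftCompatible e πσ.1 πσ.2 ∧ ¬P πσ, f πσ.1 * g πσ.2
      = ∑ πσ with ¬P πσ, f πσ.1 * g πσ.2 := by
    refine sum_congr (filter_congr fun πσ _ => and_iff_right_of_imp fun hP => ?_) fun _ _ => rfl
    rcases not_and_or.1 hP with h | h
    · exact isShiftCompatible_of_card_parts_left_eq_one he (not_not.1 h)
    · exact isShiftCompatible_of_card_parts_right_eq_one he (not_not.1 h)
  rw [hprod, sum_mul_sum, ← Fintype.sum_prod_type', ← sum_filter_not_add_sum_filter univ P,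
    ← hcompat, ← sum_filter_not_add_sum_filter (univ.filter _) P, filter_filter, filter_filter]
  ring

lemma sum_isShiftCompatible_card_parts_ne_one [Nonempty α] (m n : ℕ) :
    ∑ πσ : Finpartition (univ : Finset α) × Finpartition (univ : Finset α)
        with IsShiftCompatible e πσ.1 πσ.2 ∧ #πσ.1.parts ≠ 1 ∧ #πσ.2.parts ≠ 1,
        m.descFactorial #πσ.1.parts * n.descFactorial #πσ.2.parts
      = ∑ s ∈ Icc 2 m, ∑ t ∈ Icc 2 n, m.descFactorial s * n.descFactorial t *
          #{πσ : Finpartition (univ : Finset α) × Finpartition (univ : Finset α) |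
            #πσ.1.parts = s ∧ #πσ.2.parts = t ∧ IsShiftCompatible e πσ.1 πσ.2} := by
  set F := ({πσ | IsShiftCompatible e πσ.1 πσ.2} :
    Finset (Finpartition (univ : Finset α) × Finpartition (univ : Finset α)))
  let g := fun πσ : Finpartition (univ : Finset α) × Finpartition (univ : Finset α) =>
    (#πσ.1.parts, #πσ.2.parts)
  calc _ = ∑ πσ ∈ F with g πσ ∈ Icc 2 m ×ˢ Icc 2 n,
        m.descFactorial (g πσ).1 * n.descFactorial (g πσ).2 := by
        rw [filter_filter]
        refine (sum_subset (fun πσ => ?_) fun πσ hπσ hnot => ?_).symm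
        · simp only [mem_filter, mem_univ, true_and, mem_product, mem_Icc, g]
          rintro ⟨h, ⟨hs, -⟩, ⟨ht, -⟩⟩
          exact ⟨h, by omega, by omega⟩
        · simp only [mem_filter, mem_univ, true_and, mem_product, mem_Icc, g, not_and] at hπσ hnot
          obtain ⟨hc, hπ, hσ⟩ := hπσ
          have := πσ.1.card_parts_pos univ_nonempty
          have := πσ.2.card_parts_pos univ_nonempty
          rcases le_or_gt #πσ.1.parts m with hm | hm
          · have := hnot hc ⟨by omega, hm⟩
            rw [Nat.descFactorial_eq_zero_iff_lt.2 (by omega : n < #πσ.2.parts), mul_zero]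
          · rw [Nat.descFactorial_eq_zero_iff_lt.2 hm, zero_mul]
    _ = ∑ st ∈ Icc 2 m ×ˢ Icc 2 n, ∑ πσ ∈ F with g πσ = st,
        m.descFactorial st.1 * n.descFactorial st.2 :=
      (sum_fiberwise_eq_sum_filter' F _ g fun st => m.descFactorial st.1 * n.descFactorial st.2).symm
    _ = _ := by
      rw [sum_product]
      refine sum_congr rfl fun s _ => sum_congr rfl fun t _ => ?_
      rw [sum_const, smul_eq_mul, mul_comm, filter_filter]
      congr 1
      exact congrArg card (filter_congr fun πσ _ => by simp only [g, Prod.ext_iff]; tauto)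

end ShiftCompatible

section Cyclic

variable {p : ℕ}

lemma val_cyc (y : Fin p) : (cyc p y : ℕ) = if (y : ℕ) + 1 = p then 0 else (y : ℕ) + 1 := by
  have := y.isLt
  split_ifs with h
  · simp [cyc, h]
  · exact Nat.mod_eq_of_lt (by omega)

lemma val_cycPred (y : Fin p) :
    (cycPred p y : ℕ) = if (y : ℕ) = 0 then p - 1 else (y : ℕ) - 1 := by
  have := y.isLt
  split_ifs with h
  · simp [cycPred, h]
  · show ((y : ℕ) + p - 1) % p = y - 1
    rw [show (y : ℕ) + p - 1 = y - 1 + p by omega, Nat.add_mod_right, Nat.mod_eq_of_lt (by omega)]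

lemma cyc_cycPred : Function.LeftInverse (cyc p) (cycPred p) := fun y => by
  ext
  rw [val_cyc, val_cycPred]
  split_ifs <;> omega

lemma semiconj_revPerm_cyc_cycPred : Function.Semiconj Fin.revPerm (cyc p) (cycPred p) :=
  fun y => by
    ext
    simp only [Fin.revPerm_apply, Fin.val_rev, val_cyc, val_cycPred]
    split_ifs <;> omega

end Cyclic

lemma natCard_delta_eq_sum (M N p : ℕ) [NeZero M] [NeZero N] :
    Nat.card {ab : (Fin p → ZMod M) × (Fin p → ZMod N) //
      (univ.val.map fun y => (ab.1 y, ab.2 y)) = (univ.val.map fun y => (ab.1 y, ab.2 (cyc p y)))}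
      = ∑ πσ : Finpartition (univ : Finset (Fin p)) × Finpartition (univ : Finset (Fin p))
          with IsShiftCompatible (cycPred p) πσ.1 πσ.2,
          M.descFactorial #πσ.1.parts * N.descFactorial #πσ.2.parts := by
  rw [Nat.card_eq_fintype_card, Fintype.card_subtype,
    card_map_pair_eq_of_semiconj Fin.revPerm semiconj_revPerm_cyc_cycPred,
    card_map_pair_eq_sum cyc_cycPred.injective, ZMod.card, ZMod.card]

lemma eps_mul_Spart_mul_Spart (p s t : ℕ) :
    eps p s t * Spart p s * Spart p t
      = #{πσ : Finpartition (univ : Finset (Fin p)) × Finpartition (univ : Finset (Fin p)) |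
          #πσ.1.parts = s ∧ #πσ.2.parts = t ∧ IsShiftCompatible (cycPred p) πσ.1 πσ.2} := by
  have hle : #{πσ : Finpartition (univ : Finset (Fin p)) × Finpartition (univ : Finset (Fin p)) |
      #πσ.1.parts = s ∧ #πσ.2.parts = t ∧ tri p πσ.1 πσ.2} ≤ Spart p s * Spart p t := by
    rw [Spart, Spart, ← card_product, ← filter_product, univ_product_univ]
    exact card_le_card (monotone_filter_right _ fun _ _ h => ⟨h.1, h.2.1⟩)
  rw [eps, mul_assoc, div_mul_cancel_of_imp]
  · rfl
  intro h
  have h0 : Spart p s * Spart p t = 0 := by exact_mod_cast h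
  exact_mod_cast Nat.eq_zero_of_le_zero (h0 ▸ hle)

lemma descFactorial_mul_Spart_div_mul_eps (M N p s t : ℕ) :
    (M.descFactorial s : ℝ) * ((Spart p s : ℝ) / (M : ℝ) ^ p) *
        (N.descFactorial t : ℝ) * ((Spart p t : ℝ) / (N : ℝ) ^ p) * eps p s t
      = M.descFactorial s * N.descFactorial t *
          (#{πσ : Finpartition (univ : Finset (Fin p)) × Finpartition (univ : Finset (Fin p)) |
            #πσ.1.parts = s ∧ #πσ.2.parts = t ∧ IsShiftCompatible (cycPred p) πσ.1 πσ.2} : ℝ)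
          / ((M : ℝ) * N) ^ p := by
  rw [← eps_mul_Spart_mul_Spart]
  ring

lemma div_mul_pow_eq_of_add_mul_eq {A B C R M N : ℝ} (q : ℕ) (hM : M ≠ 0) (hN : N ≠ 0)
    (hA : A + B * C = M ^ (q + 1) * N ^ (q + 1) + R) (hB : B + M = M ^ (q + 1))
    (hC : C + N = N ^ (q + 1)) :
    A / (M * N) ^ (q + 1) = 1 / M ^ q + 1 / N ^ q - 1 / (M * N) ^ q + R / (M * N) ^ (q + 1) := by
  have hA' : A = M * N ^ (q + 1) + M ^ (q + 1) * N - M * N + R := by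
    linear_combination hA - C * hB - (M ^ (q + 1) - M) * hC
  rw [hA']
  field_simp
  ring

theorem stmt12 (M N p : ℕ) (hM : 2 ≤ M) (hN : 2 ≤ N) (hp : 1 ≤ p) :
    delta M N p = 1 / (M : ℝ) ^ (p - 1) + 1 / (N : ℝ) ^ (p - 1)
      - 1 / ((M : ℝ) * N) ^ (p - 1)
      + ∑ s ∈ Finset.Icc 2 M, ∑ t ∈ Finset.Icc 2 N,
          (M.descFactorial s : ℝ) * ((Spart p s : ℝ) / (M : ℝ) ^ p) *
          (N.descFactorial t : ℝ) * ((Spart p t : ℝ) / (N : ℝ) ^ p) * eps p s t := by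
  obtain ⟨q, rfl⟩ : ∃ q, p = q + 1 := ⟨p - 1, by omega⟩
  have : NeZero M := ⟨by omega⟩
  have : NeZero N := ⟨by omega⟩
  have hsplit := sum_isShiftCompatible_add_mul (cycPred (q + 1)) cyc_cycPred.injective
    (fun π => M.descFactorial #π.parts) (fun σ => N.descFactorial #σ.parts)
  rw [sum_descFactorial_card_parts, sum_descFactorial_card_parts,
    sum_isShiftCompatible_card_parts_ne_one] at hsplit
  have hA := congrArg (Nat.cast : ℕ → ℝ) hsplit
  have hB := congrArg (Nat.cast : ℕ → ℝ) (sum_descFactorial_card_parts_ne_one (Fin (q + 1)) M)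
  have hC := congrArg (Nat.cast : ℕ → ℝ) (sum_descFactorial_card_parts_ne_one (Fin (q + 1)) N)
  push_cast [Fintype.card_fin] at hA hB hC
  rw [delta, natCard_delta_eq_sum]
  simp only [descFactorial_mul_Spart_div_mul_eps, ← sum_div]
  push_cast
  exact div_mul_pow_eq_of_add_mul_eq q (by positivity) (by positivity) hA hB hC
end

section
/- If π ▷ σ for set partitions π, σ of {1,...,p} (i.e., |β ∩ γ| = |(β−1) ∩ γ| for all blocks β ∈ π, γ ∈ σ, cyclic shift mod p), then |π| + |σ| ≤ p + 1. -/
/-!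
Consider the bipartite graph whose vertices are the blocks of `π` and of `σ`, with an edge
`β — γ` for every point of `β ∩ γ`. It has at most `p` edges, so `|π| + |σ| ≤ p + 1` as soon as
it is connected. The set `T` of points lying in the blocks of one connected component is a union
of `π`-blocks and a union of `σ`-blocks; summing `|β ∩ γ| = |(β - 1) ∩ γ|` over the blocks inside
`T` gives `|(T - 1) ∩ T| = |T|`, so `T - 1 = T`, and a nonempty shift-invariant subset of
`ℤ/p` is everything.
-/

open Finset

lemma cycPred_val {p : ℕ} (y : Fin p) :
    (cycPred p y : ℕ) = if (y : ℕ) = 0 then p - 1 else y - 1 := by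
  have hy := y.isLt
  show ((y : ℕ) + p - 1) % p = _
  split_ifs with h0
  · rw [h0, zero_add]
    exact Nat.mod_eq_of_lt (by omega)
  · rw [show (y : ℕ) + p - 1 = (y - 1) + p by omega, Nat.add_mod_right]
    exact Nat.mod_eq_of_lt (by omega)

lemma cycPred_injective (p : ℕ) : Function.Injective (cycPred p) := by
  intro a b hab
  have ha := a.isLt
  have hb := b.isLt
  have hval := congrArg Fin.val hab
  rw [cycPred_val, cycPred_val] at hval
  ext
  split_ifs at hval <;> omega

lemma cycPred_succ {p k : ℕ} (hk : k + 1 < p) : cycPred p ⟨k + 1, hk⟩ = ⟨k, by omega⟩ := by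
  ext
  simp [cycPred_val]

lemma eq_of_forall_comp_cycPred_eq {p : ℕ} {β : Type*} {c : Fin p → β}
    (hc : ∀ y, c (cycPred p y) = c y) (x y : Fin p) : c x = c y := by
  have hzero : ∀ k (hk : k < p), c ⟨k, hk⟩ = c ⟨0, by omega⟩ := by
    intro k
    induction k with
    | zero => intro _; rfl
    | succ k ih =>
      intro hk
      rw [← hc, cycPred_succ hk, ih]
  rw [hzero x x.isLt, hzero y y.isLt]

lemma Finset.card_biUnion_inter_biUnion {ι κ α : Type*} [DecidableEq α]
    {s : Finset ι} {t : Finset κ} {f : ι → Finset α} {g : κ → Finset α}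
    (hf : (s : Set ι).PairwiseDisjoint f) (hg : (t : Set κ).PairwiseDisjoint g) :
    #(s.biUnion f ∩ t.biUnion g) = ∑ i ∈ s, ∑ j ∈ t, #(f i ∩ g j) := by
  rw [biUnion_inter, card_biUnion (hf.mono fun _ => inter_subset_left)]
  refine sum_congr rfl fun i _ => ?_
  rw [inter_biUnion, card_biUnion (hg.mono fun _ => inter_subset_right)]

lemma Finpartition.biUnion_filter_subset {α : Type*} [DecidableEq α] {s T : Finset α}
    (P : Finpartition s) (hTs : T ⊆ s) (hT : ∀ x ∈ T, P.part x ⊆ T) :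
    (P.parts.filter (· ⊆ T)).biUnion id = T := by
  ext x
  simp only [mem_biUnion, mem_filter, id]
  constructor
  · rintro ⟨β, ⟨-, hβT⟩, hxβ⟩
    exact hβT hxβ
  · intro hx
    exact ⟨P.part x, ⟨P.part_mem.2 (hTs hx), hT x hx⟩, P.mem_part (hTs hx)⟩

lemma Finpartition.pairwiseDisjoint_filter {α : Type*} [DecidableEq α] {s : Finset α}
    (P : Finpartition s) (q : Finset α → Prop) [DecidablePred q] :
    ((P.parts.filter q : Finset (Finset α)) : Set (Finset α)).PairwiseDisjoint id :=
  P.disjoint.subset (coe_subset.2 (filter_subset _ _))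

/-- Summing `tri` over the blocks inside `T` gives `#(cycPred '' T ∩ T) = #T`. -/
lemma image_cycPred_eq_of_tri {p : ℕ} {π σ : Finpartition (univ : Finset (Fin p))}
    (h : tri p π σ) {T : Finset (Fin p)} (hπ : ∀ x ∈ T, π.part x ⊆ T)
    (hσ : ∀ x ∈ T, σ.part x ⊆ T) : T.image (cycPred p) = T := by
  set B := π.parts.filter (· ⊆ T)
  set C := σ.parts.filter (· ⊆ T)
  have hB : B.biUnion id = T := π.biUnion_filter_subset (subset_univ T) hπ
  have hC : C.biUnion id = T := σ.biUnion_filter_subset (subset_univ T) hσ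
  have hBimage : B.biUnion (image (cycPred p)) = T.image (cycPred p) := by
    rw [← hB, biUnion_image]
    rfl
  have hBdisj := π.pairwiseDisjoint_filter (· ⊆ T)
  have hBimage_disj : (B : Set (Finset (Fin p))).PairwiseDisjoint (image (cycPred p)) :=
    fun β hβ β' hβ' hne => (disjoint_image (cycPred_injective p)).2 (hBdisj hβ hβ' hne)
  have hcard : #(T.image (cycPred p) ∩ T) = #T :=
    calc #(T.image (cycPred p) ∩ T)
        = ∑ β ∈ B, ∑ γ ∈ C, #(β.image (cycPred p) ∩ γ) := by
          rw [← hBimage, ← hC,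
            card_biUnion_inter_biUnion hBimage_disj (σ.pairwiseDisjoint_filter _)]
          rfl
      _ = ∑ β ∈ B, ∑ γ ∈ C, #(β ∩ γ) :=
          sum_congr rfl fun β hβ => sum_congr rfl fun γ hγ =>
            (h β (mem_filter.1 hβ).1 γ (mem_filter.1 hγ).1).symm
      _ = #(B.biUnion id ∩ C.biUnion id) :=
          (card_biUnion_inter_biUnion hBdisj (σ.pairwiseDisjoint_filter _)).symm
      _ = #T := by rw [hB, hC, inter_self]
  have hcard_image : #(T.image (cycPred p)) = #T := card_image_of_injective T (cycPred_injective p)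
  have hsub : T.image (cycPred p) ⊆ T := by
    rw [← inter_eq_left]
    exact eq_of_subset_of_card_le inter_subset_left (by rw [hcard, hcard_image])
  exact eq_of_subset_of_card_le hsub hcard_image.ge

section BlockGraph

variable {α : Type*} [Fintype α] [DecidableEq α] (π σ : Finpartition (univ : Finset α))

abbrev BlockVert : Type _ := π.parts ⊕ σ.parts

def leftBlock (x : α) : BlockVert π σ := .inl ⟨π.part x, π.part_mem.2 (mem_univ x)⟩

def rightBlock (x : α) : BlockVert π σ := .inr ⟨σ.part x, σ.part_mem.2 (mem_univ x)⟩

def blockGraph : SimpleGraph (BlockVert π σ) :=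
  SimpleGraph.fromEdgeSet (Set.range fun x => s(leftBlock π σ x, rightBlock π σ x))

lemma blockGraph_adj_leftBlock_rightBlock (x : α) :
    (blockGraph π σ).Adj (leftBlock π σ x) (rightBlock π σ x) :=
  (SimpleGraph.fromEdgeSet_adj _).2 ⟨⟨x, rfl⟩, Sum.inl_ne_inr⟩

lemma exists_eq_leftBlock_or_eq_rightBlock (u : BlockVert π σ) :
    ∃ x, u = leftBlock π σ x ∨ u = rightBlock π σ x := by
  rcases u with ⟨β, hβ⟩ | ⟨γ, hγ⟩
  · obtain ⟨x, hx⟩ := π.nonempty_of_mem_parts hβ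
    exact ⟨x, .inl (by simp [leftBlock, π.part_eq_of_mem hβ hx])⟩
  · obtain ⟨x, hx⟩ := σ.nonempty_of_mem_parts hγ
    exact ⟨x, .inr (by simp [rightBlock, σ.part_eq_of_mem hγ hx])⟩

lemma card_parts_add_card_parts_le_of_connected (hG : (blockGraph π σ).Connected) :
    #π.parts + #σ.parts ≤ Fintype.card α + 1 := by
  have hedges : Nat.card (blockGraph π σ).edgeSet ≤ Fintype.card α :=
    calc Nat.card (blockGraph π σ).edgeSet
        ≤ Nat.card (Set.range fun x => s(leftBlock π σ x, rightBlock π σ x)) :=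
          Nat.card_mono (Set.toFinite _) (by simp [blockGraph, SimpleGraph.edgeSet_fromEdgeSet])
      _ ≤ Fintype.card α := (Finite.card_range_le _).trans (Nat.card_eq_fintype_card).le
  have hverts := hG.card_vert_le_card_edgeSet_add_one
  rw [Nat.card_eq_fintype_card, Fintype.card_sum, Fintype.card_coe, Fintype.card_coe] at hverts
  omega

end BlockGraph

section CyclicBlockGraph

variable {p : ℕ} {π σ : Finpartition (univ : Finset (Fin p))}

lemma connectedComponentMk_rightBlock (x : Fin p) :
    (blockGraph π σ).connectedComponentMk (rightBlock π σ x) =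
      (blockGraph π σ).connectedComponentMk (leftBlock π σ x) :=
  (SimpleGraph.ConnectedComponent.sound (blockGraph_adj_leftBlock_rightBlock π σ x).reachable).symm

/-- The points of a connected component form a union of `π`-blocks and of `σ`-blocks,
so `image_cycPred_eq_of_tri` applies to them. -/
lemma connectedComponentMk_leftBlock_cycPred (h : tri p π σ) (y : Fin p) :
    (blockGraph π σ).connectedComponentMk (leftBlock π σ (cycPred p y)) =
      (blockGraph π σ).connectedComponentMk (leftBlock π σ y) := by
  classical
  set c : Fin p → (blockGraph π σ).ConnectedComponent :=
    fun x => (blockGraph π σ).connectedComponentMk (leftBlock π σ x)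
  set T := univ.filter fun x => c x = c y
  have hT : T.image (cycPred p) = T := by
    refine image_cycPred_eq_of_tri h (fun x hx z hz => ?_) (fun x hx z hz => ?_)
    · have hzx : leftBlock π σ z = leftBlock π σ x := by
        simp [leftBlock, π.part_eq_of_mem (π.part_mem.2 (mem_univ x)) hz]
      simpa [T, c, hzx] using hx
    · have hzx : rightBlock π σ z = rightBlock π σ x := by
        simp [rightBlock, σ.part_eq_of_mem (σ.part_mem.2 (mem_univ x)) hz]
      simp only [T, c, mem_filter, mem_univ, true_and] at hx ⊢
      rw [← connectedComponentMk_rightBlock, hzx, connectedComponentMk_rightBlock, hx]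
  have hy : cycPred p y ∈ T := hT ▸ mem_image_of_mem _ (by simp [T])
  simpa only [T, mem_filter, mem_univ, true_and] using hy

lemma blockGraph_connected_of_tri (hp : 1 ≤ p) (h : tri p π σ) : (blockGraph π σ).Connected := by
  have hconst := eq_of_forall_comp_cycPred_eq
    (c := fun x => (blockGraph π σ).connectedComponentMk (leftBlock π σ x))
    (connectedComponentMk_leftBlock_cycPred h)
  have hcomp : ∀ u, (blockGraph π σ).connectedComponentMk u =
      (blockGraph π σ).connectedComponentMk (leftBlock π σ ⟨0, hp⟩) := by
    intro u
    obtain ⟨x, rfl | rfl⟩ := exists_eq_leftBlock_or_eq_rightBlock π σ u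
    · exact hconst x _
    · rw [connectedComponentMk_rightBlock]
      exact hconst x _
  rw [SimpleGraph.connected_iff]
  exact ⟨fun u v => SimpleGraph.ConnectedComponent.exact ((hcomp u).trans (hcomp v).symm),
    ⟨leftBlock π σ ⟨0, hp⟩⟩⟩

end CyclicBlockGraph

theorem stmt14 (p : ℕ) (hp : 1 ≤ p)
    (π σ : Finpartition (Finset.univ : Finset (Fin p))) (h : tri p π σ) :
    π.parts.card + σ.parts.card ≤ p + 1 := by
  simpa using card_parts_add_card_parts_le_of_connected π σ (blockGraph_connected_of_tri hp h)
end

section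
/- For any M, N ≥ 1 and p ≥ 1: δ_p(M,N) = (1/(MN)^p) · ∫_{𝕋^{M×N}} Tr(G(Q)^p) dQ, where for Q ∈ 𝕋^{M×N} (an M×N matrix with unit-circle entries), G(Q) ∈ M_M(ℂ) is the Gram matrix of the rows of Q, G(Q)_{ab} = ⟨R_a, R_b⟩ = Σ_{j=1}^{N} Q_{aj} · conj(Q_{bj}), and the integral is with respect to the normalized Haar measure on 𝕋^{M×N}. -/
open MeasureTheory

/-- the Gram matrix of the rows of `Q ∈ 𝕋^{M×N}` -/
noncomputable def Gram (M N : ℕ) (Q : Fin M → Fin N → AddCircle (1 : ℝ)) :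
    Matrix (Fin M) (Fin M) ℂ :=
  Matrix.of fun a b => ∑ j, (AddCircle.toCircle (Q a j) : ℂ) *
    (starRingEnd ℂ) (AddCircle.toCircle (Q b j) : ℂ)

/-!
Expanding the trace along closed walks, `Tr (G(Q)^p)` is a sum over `(a, b) ∈ [M]^p × [N]^p` of
the character monomials `∏_y Q_{a_y b_{y+1}} · conj Q_{a_y b_y}`. By orthogonality of the
characters of the torus such a monomial integrates to `1` when every entry `(i, j)` occurs equally
often among the `(a_y, b_{y+1})` and among the `(a_y, b_y)`, that is when the two multisets agree,
and to `0` otherwise.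
-/

open ComplexConjugate

theorem cyc_eq_finRotate (p : ℕ) : cyc p = finRotate p := by
  funext y
  have := y.neZero
  ext
  rw [finRotate_apply, Fin.val_add, Fin.val_one', cyc, Nat.add_mod_mod]

theorem Fin.snoc_eq_cons_comp_finRotate {α : Type*} {q : ℕ} (x : α) (c : Fin q → α) :
    (Fin.snoc c x : Fin (q + 1) → α) = Fin.cons x c ∘ finRotate (q + 1) := by
  funext i
  induction i using Fin.lastCases with
  | last => simp
  | cast j =>
    have : finRotate (q + 1) j.castSucc = j.succ := by
      ext; rw [coe_finRotate_of_ne_last (Fin.castSucc_lt_last j).ne]; simp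
    simp [this]

namespace Matrix

variable {ι R : Type*} [Fintype ι] [DecidableEq ι] [CommSemiring R]

theorem pow_succ_apply_eq_sum_prod (A : Matrix ι ι R) (q : ℕ) (x y : ι) :
    (A ^ (q + 1)) x y = ∑ c : Fin q → ι,
      ∏ i, A ((Fin.cons x c : Fin (q + 1) → ι) i) ((Fin.snoc c y : Fin (q + 1) → ι) i) := by
  induction q generalizing x with
  | zero => simp [Fin.snoc]
  | succ q ih =>
    rw [pow_succ', mul_apply, ← (Fin.consEquiv fun _ => ι).sum_comp, Fintype.sum_prod_type]
    refine Finset.sum_congr rfl fun z _ => ?_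
    simp [ih, Finset.mul_sum, Fin.prod_univ_succ, Fin.consEquiv, ← Fin.cons_snoc_eq_snoc_cons]

theorem trace_pow_eq_sum_prod (A : Matrix ι ι R) {p : ℕ} (hp : p ≠ 0) :
    trace (A ^ p) = ∑ d : Fin p → ι, ∏ i, A (d i) (d (finRotate p i)) := by
  obtain ⟨q, rfl⟩ := Nat.exists_eq_succ_of_ne_zero hp
  rw [← (Fin.consEquiv fun _ => ι).sum_comp, Fintype.sum_prod_type, trace]
  refine Finset.sum_congr rfl fun x _ => ?_
  rw [diag_apply, pow_succ_apply_eq_sum_prod]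
  simp only [Fin.snoc_eq_cons_comp_finRotate, Function.comp_apply, Fin.consEquiv_apply]

end Matrix

theorem Fintype.prod_comp_eq_prod_pow_count {β α M : Type*} [Fintype β] [Fintype α]
    [DecidableEq α] [CommMonoid M] (s : β → α) (f : α → M) :
    ∏ y, f (s y) = ∏ z, f z ^ (Finset.univ.val.map s).count z := by
  calc ∏ y, f (s y) = ((Finset.univ.val.map s).map f).prod := by rw [Multiset.map_map]; rfl
    _ = ∏ z ∈ (Finset.univ.val.map s).toFinset, f z ^ (Finset.univ.val.map s).count z :=
      Finset.prod_multiset_map_count _ _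
    _ = _ := Finset.prod_subset (Finset.subset_univ _) fun z _ hz => by
      rw [Multiset.count_eq_zero_of_notMem (by simpa using hz), pow_zero]

namespace AddCircle

theorem integral_fourier (n : ℤ) :
    ∫ x : AddCircle (1 : ℝ), fourier n x = if n = 0 then 1 else 0 := by
  have h := congrFun (fourierCoeff_fourier (T := 1) n) 0
  simp only [fourierCoeff, neg_zero, fourier_zero, one_smul] at h
  rw [volume_eq_smul_haarAddCircle, ENNReal.ofReal_one, one_smul, h, Pi.single_apply]
  exact if_congr eq_comm rfl rfl

theorem integral_pi_prod_fourier {α : Type*} [Fintype α] (k : α → ℤ) :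
    ∫ x : α → AddCircle (1 : ℝ), ∏ z, fourier (k z) (x z) = if k = 0 then 1 else 0 := by
  rw [integral_fintype_prod_volume_eq_prod (fun z => fourier (k z))]
  simp_rw [integral_fourier, Finset.prod_boole, Finset.mem_univ, true_implies, funext_iff,
    Pi.zero_apply]

theorem integral_prod_fourier_uncurry {ι κ : Type*} [Fintype ι] [Fintype κ] (k : ι × κ → ℤ) :
    ∫ Q : ι → κ → AddCircle (1 : ℝ), ∏ z, fourier (k z) (Function.uncurry Q z) =
      if k = 0 then 1 else 0 := by
  simp_rw [Fintype.prod_prod_type, Function.uncurry_apply_pair]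
  rw [integral_fintype_prod_volume_eq_prod
    (fun a (x : κ → AddCircle (1 : ℝ)) => ∏ b, fourier (k (a, b)) (x b))]
  simp_rw [integral_pi_prod_fourier, Finset.prod_boole, Finset.mem_univ, true_implies, funext_iff,
    Pi.zero_apply, Prod.forall]

theorem fourier_natCast_apply {T : ℝ} (m : ℕ) (x : AddCircle T) :
    fourier (m : ℤ) x = (toCircle x : ℂ) ^ m := by
  rw [fourier_apply, natCast_zsmul, toCircle_nsmul, Circle.coe_pow]

theorem prod_toCircle_mul_conj_eq_prod_fourier {T : ℝ} {β α : Type*} [Fintype β] [Fintype α]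
    [DecidableEq α] (s t : β → α) (x : α → AddCircle T) :
    ∏ y, (toCircle (x (s y)) : ℂ) * conj (toCircle (x (t y)) : ℂ) =
      ∏ z, fourier (((Finset.univ.val.map s).count z : ℤ) - (Finset.univ.val.map t).count z)
        (x z) := by
  rw [Finset.prod_mul_distrib,
    Fintype.prod_comp_eq_prod_pow_count s (fun z => (toCircle (x z) : ℂ)),
    Fintype.prod_comp_eq_prod_pow_count t (fun z => conj (toCircle (x z) : ℂ)),
    ← Finset.prod_mul_distrib]
  refine Finset.prod_congr rfl fun z _ => ?_
  rw [sub_eq_add_neg, fourier_add, fourier_neg, fourier_natCast_apply, fourier_natCast_apply, map_pow]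

theorem integral_prod_toCircle_mul_conj {ι κ β : Type*} [Fintype ι] [Fintype κ] [Fintype β]
    [DecidableEq ι] [DecidableEq κ] (s t : β → ι × κ) :
    ∫ Q : ι → κ → AddCircle (1 : ℝ),
        ∏ y, (toCircle (Q (s y).1 (s y).2) : ℂ) * conj (toCircle (Q (t y).1 (t y).2) : ℂ) =
      if Finset.univ.val.map s = Finset.univ.val.map t then 1 else 0 := by
  refine (integral_congr_ae (ae_of_all _ fun Q =>
    prod_toCircle_mul_conj_eq_prod_fourier s t (Function.uncurry Q))).trans ?_
  rw [integral_prod_fourier_uncurry]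
  simp_rw [funext_iff, Pi.zero_apply, sub_eq_zero, Nat.cast_inj, ← Multiset.ext]

end AddCircle

theorem trace_Gram_pow {M N p : ℕ} (hp : p ≠ 0) (Q : Fin M → Fin N → AddCircle (1 : ℝ)) :
    (Gram M N Q ^ p).trace = ∑ ab : (Fin p → Fin M) × (Fin p → Fin N),
      ∏ y, (AddCircle.toCircle (Q (ab.1 y) (ab.2 (finRotate p y))) : ℂ) *
        conj (AddCircle.toCircle (Q (ab.1 y) (ab.2 y)) : ℂ) := by
  rw [Matrix.trace_pow_eq_sum_prod _ hp, Fintype.sum_prod_type]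
  refine Finset.sum_congr rfl fun a _ => ?_
  simp only [Gram, Matrix.of_apply]
  rw [Finset.prod_univ_sum]
  -- the column `J y` chosen in the factor `y` is renamed `b (y + 1)`
  refine Fintype.sum_equiv ((finRotate p).arrowCongr (Equiv.refl _)) _ _ fun J => ?_
  rw [Finset.prod_mul_distrib, Finset.prod_mul_distrib]
  congr 1
  · simp only [Equiv.arrowCongr_apply, Equiv.coe_refl, Function.comp_apply, id_eq,
      Equiv.symm_apply_apply]
  · refine Eq.trans ?_ (Equiv.prod_comp (finRotate p) _)
    simp only [Equiv.arrowCongr_apply, Equiv.coe_refl, Function.comp_apply, id_eq,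
      Equiv.symm_apply_apply]

theorem integral_trace_Gram_pow {M N p : ℕ} (hp : p ≠ 0) :
    ∫ Q : Fin M → Fin N → AddCircle (1 : ℝ), (Gram M N Q ^ p).trace =
      Nat.card {ab : (Fin p → Fin M) × (Fin p → Fin N) //
        (Finset.univ.val.map fun y => (ab.1 y, ab.2 y)) =
          Finset.univ.val.map fun y => (ab.1 y, ab.2 (finRotate p y))} := by
  have hcont (ab : (Fin p → Fin M) × (Fin p → Fin N)) :
      Continuous fun Q : Fin M → Fin N → AddCircle (1 : ℝ) =>
        ∏ y, (AddCircle.toCircle (Q (ab.1 y) (ab.2 (finRotate p y))) : ℂ) *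
          conj (AddCircle.toCircle (Q (ab.1 y) (ab.2 y)) : ℂ) := by
    fun_prop
  simp only [trace_Gram_pow hp]
  rw [integral_finsetSum _ fun ab _ =>
      (hcont ab).integrable_of_hasCompactSupport (HasCompactSupport.of_compactSpace _),
    Finset.sum_congr rfl fun ab _ => AddCircle.integral_prod_toCircle_mul_conj
      (fun y => (ab.1 y, ab.2 (finRotate p y))) (fun y => (ab.1 y, ab.2 y)),
    Finset.sum_boole, Nat.card_eq_fintype_card, Fintype.card_subtype]
  simp only [eq_comm]

theorem stmt17 (M N p : ℕ) (hM : 1 ≤ M) (hN : 1 ≤ N) (hp : 1 ≤ p) :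
    (delta M N p : ℂ) = (1 / ((M : ℂ) * N) ^ p) *
      ∫ Q : Fin M → Fin N → AddCircle (1 : ℝ), Matrix.trace (Gram M N Q ^ p) := by
  obtain ⟨m, rfl⟩ := Nat.exists_eq_add_of_le' hM
  obtain ⟨n, rfl⟩ := Nat.exists_eq_add_of_le' hN
  rw [integral_trace_Gram_pow (by omega), delta, cyc_eq_finRotate, one_div_mul_eq_div]
  push_cast
  -- `ZMod (k + 1)` is `Fin (k + 1)` by definition
  rfl
end
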